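/- arXiv:2311.02243 — 6 statements merged into one kernel-verified Lean document; each statement's English description precedes it below -/
import Mathlib

section
/- Let (Ω, P) be a probability space, C a measurable event (the event that the true label is covered by the prediction interval), A a random variable taking values in a finite type 𝒜, and Y a measurable event (a binary outcome) with P(Y) > 0 and P(Yᶜ) > 0. Assume (i) marginal independence of C and A: for every a ∈ 𝒜, P(C ∩ {A = a}) = P(C)·P({A = a}); and (ii) conditional independence of C and A given Y: for every a ∈ 𝒜, P(C ∩ {A = a} ∩ Y)·P(Y) = P(C ∩ Y)·P({A = a} ∩ Y) and P(C ∩ {A = a} ∩ Yᶜ)·P(Yᶜ) = P(C ∩ Yᶜ)·P({A = a} ∩ Yᶜ). Then either A is independent of Y (for every a ∈ 𝒜, P({A = a} ∩ Y) = P({A = a})·P(Y)) or C is independent of Y (P(C ∩ Y) = P(C)·P(Y)). -/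
open MeasureTheory

/-- Mutual exclusivity of equalized coverage and equal opportunity of coverage
(binary outcome version): if the coverage event `C` is independent of the protected
attribute `A` both marginally and conditionally on a binary outcome event `Y`
(with `0 < P(Y)` and `0 < P(Yᶜ)`), then either `A` is independent of `Y`
or `C` is independent of `Y`. -/
theorem mutual_exclusivity
    {Ω : Type*} [MeasurableSpace Ω] (μ : Measure Ω) [IsProbabilityMeasure μ]
    {𝒜 : Type*} [Fintype 𝒜] [MeasurableSpace 𝒜] [MeasurableSingletonClass 𝒜]
    (C : Set Ω) (hC : MeasurableSet C)
    (A : Ω → 𝒜) (hA : Measurable A)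
    (Y : Set Ω) (hY : MeasurableSet Y) (hY0 : 0 < μ Y) (hYc0 : 0 < μ Yᶜ)
    (hmarg : ∀ a : 𝒜, μ (C ∩ {ω | A ω = a}) = μ C * μ {ω | A ω = a})
    (hcond : ∀ a : 𝒜,
      μ (C ∩ {ω | A ω = a} ∩ Y) * μ Y = μ (C ∩ Y) * μ ({ω | A ω = a} ∩ Y))
    (hcondc : ∀ a : 𝒜,
      μ (C ∩ {ω | A ω = a} ∩ Yᶜ) * μ Yᶜ = μ (C ∩ Yᶜ) * μ ({ω | A ω = a} ∩ Yᶜ)) :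
    (∀ a : 𝒜, μ ({ω | A ω = a} ∩ Y) = μ {ω | A ω = a} * μ Y) ∨
      μ (C ∩ Y) = μ C * μ Y := by
  by_cases hCY : μ (C ∩ Y) = μ C * μ Y
  · exact Or.inr hCY
  left
  intro a
  -- real-valued quantities
  set c1 := (μ (C ∩ Y)).toReal with hc1
  set c2 := (μ (C ∩ Yᶜ)).toReal with hc2
  set y := (μ Y).toReal with hy
  set y' := (μ Yᶜ).toReal with hy'
  set p := (μ {ω | A ω = a}).toReal with hp
  set q := (μ ({ω | A ω = a} ∩ Y)).toReal with hq
  set q' := (μ ({ω | A ω = a} ∩ Yᶜ)).toReal with hq'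
  set x1 := (μ (C ∩ {ω | A ω = a} ∩ Y)).toReal with hx1
  set x2 := (μ (C ∩ {ω | A ω = a} ∩ Yᶜ)).toReal with hx2
  have hAa : MeasurableSet {ω | A ω = a} := hA (measurableSet_singleton a)
  -- split a measure along Y / Yᶜ
  have hsplit : ∀ s : Set Ω, μ (s ∩ Y) + μ (s ∩ Yᶜ) = μ s := by
    intro s
    rw [← Set.diff_eq]
    exact measure_inter_add_diff s hY
  have fin : ∀ s : Set Ω, μ s ≠ ⊤ := fun s => measure_ne_top μ s
  -- real versions of hypotheses
  have e1 : x1 * y = c1 * q := by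
    rw [hx1, hy, hc1, hq, ← ENNReal.toReal_mul, ← ENNReal.toReal_mul, hcond a]
  have e2 : x2 * y' = c2 * q' := by
    rw [hx2, hy', hc2, hq', ← ENNReal.toReal_mul, ← ENNReal.toReal_mul, hcondc a]
  have e3 : x1 + x2 = (c1 + c2) * p := by
    rw [hx1, hx2, ← ENNReal.toReal_add (fin _) (fin _), hsplit,
      hc1, hc2, hp, ← ENNReal.toReal_add (fin _) (fin _), hsplit,
      ← ENNReal.toReal_mul, hmarg a]
  have e4 : q + q' = p := by
    rw [hq, hq', hp, ← ENNReal.toReal_add (fin _) (fin _), hsplit]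
  have e6 : y + y' = 1 := by
    rw [hy, hy', ← ENNReal.toReal_add (fin _) (fin _), measure_add_measure_compl hY]
    simp
  have hy0 : 0 < y := ENNReal.toReal_pos hY0.ne' (fin _)
  have hy'0 : 0 < y' := ENNReal.toReal_pos hYc0.ne' (fin _)
  -- the non-independence of C and Y in real form
  have hne : c1 * y' - c2 * y ≠ 0 := by
    intro h
    apply hCY
    have hcc : c1 = (c1 + c2) * y := by linear_combination h - c1 * e6
    have : (μ (C ∩ Y)).toReal = (μ C * μ Y).toReal := by
      rw [ENNReal.toReal_mul, ← hy, ← hc1]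
      calc c1 = (c1 + c2) * y := hcc
        _ = (μ C).toReal * y := by
            rw [hc1, hc2, ← ENNReal.toReal_add (fin _) (fin _), hsplit]
    exact (ENNReal.toReal_eq_toReal_iff' (fin _) (ENNReal.mul_ne_top (fin _) (fin _))).mp this
  -- key algebraic identity
  have key : (q - p * y) * (c1 * y' - c2 * y) = 0 := by
    linear_combination (-y') * e1 + (-y) * e2 + (y * y') * e3 +
      (-(c2 * y)) * e4 + (c2 * p * y) * e6
  have hqpy : q = p * y := by
    rcases mul_eq_zero.mp key with h | h
    · linarith
    · exact absurd h hne
  have : (μ ({ω | A ω = a} ∩ Y)).toReal = (μ {ω | A ω = a} * μ Y).toReal := by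
    rw [ENNReal.toReal_mul, ← hy, ← hp, ← hq, hqpy]
  exact (ENNReal.toReal_eq_toReal_iff' (fin _) (ENNReal.mul_ne_top (fin _) (fin _))).mp this
end

section
/- Let μ be a probability measure on a measurable space Ω', let 𝒜 and 𝒱 be finite types, and let f : Ω' → 𝒜 → ℝ and g : Ω' → 𝒱 → ℝ be bounded measurable functions (each coordinate function measurable and bounded). Then ∑_{a ∈ 𝒜} ∑_{v ∈ 𝒱} | ∫ (f(y)(a) − ∫ f(y')(a) dμ(y')) · (g(y)(v) − ∫ g(y')(v) dμ(y')) dμ(y) | ≤ ∫ ( ∫ ∑_{a ∈ 𝒜} |f(y)(a) − f(y')(a)| dμ(y') ) · ( ∫ ∑_{v ∈ 𝒱} |g(y)(v) − g(y')(v)| dμ(y') ) dμ(y). -/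
open MeasureTheory

/-! By Jensen, `|f y a - ∫ f y' a dμ(y')| ≤ ∫ |f y a - f y' a| dμ(y')` for every `y`, and likewise
for `g`. Moving the absolute value inside each covariance integral, summing over `a` and `v` and
factoring the double sum then bounds the left-hand side by the integral of the product of these
two mean deviations. -/

section

variable {Ω : Type*} [MeasurableSpace Ω] {μ : Measure Ω}

lemma integrable_mul_of_abs_le [IsFiniteMeasure μ] {u w : Ω → ℝ} (hu : Measurable u)
    (hw : Measurable w) {Cu Cw : ℝ} (hCu : ∀ y, |u y| ≤ Cu) (hCw : ∀ y, |w y| ≤ Cw) :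
    Integrable (fun y => u y * w y) μ :=
  .of_bound (hu.mul hw).aestronglyMeasurable (Cu * Cw) <| ae_of_all _ fun y => by
    rw [Real.norm_eq_abs, abs_mul]
    exact mul_le_mul (hCu y) (hCw y) (abs_nonneg _) ((abs_nonneg _).trans (hCu y))

lemma abs_sub_integral_le_integral_abs_sub [IsProbabilityMeasure μ] {h : Ω → ℝ}
    (hh : Integrable h μ) (c : ℝ) : |c - ∫ y, h y ∂μ| ≤ ∫ y, |c - h y| ∂μ := by
  have hc : c - ∫ y, h y ∂μ = ∫ y, (c - h y) ∂μ := by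
    simp [integral_sub (integrable_const c) hh]
  rw [hc]
  exact abs_integral_le_integral_abs

lemma sum_sum_abs_integral_mul_le_integral_mul_sum_abs {𝒜 𝒱 : Type*} [Fintype 𝒜] [Fintype 𝒱]
    {φ : Ω → 𝒜 → ℝ} {ψ : Ω → 𝒱 → ℝ} (h : ∀ a v, Integrable (fun y => φ y a * ψ y v) μ) :
    ∑ a, ∑ v, |∫ y, φ y a * ψ y v ∂μ| ≤ ∫ y, (∑ a, |φ y a|) * ∑ v, |ψ y v| ∂μ := by
  have habs : ∀ a v, Integrable (fun y => |φ y a| * |ψ y v|) μ := fun a v => by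
    simpa only [abs_mul] using (h a v).abs
  calc ∑ a, ∑ v, |∫ y, φ y a * ψ y v ∂μ|
      ≤ ∑ a, ∑ v, ∫ y, |φ y a| * |ψ y v| ∂μ := by
        gcongr with a _ v _
        simpa only [abs_mul] using abs_integral_le_integral_abs (f := fun y => φ y a * ψ y v)
    _ = ∫ y, (∑ a, |φ y a|) * ∑ v, |ψ y v| ∂μ := by
        simp_rw [Finset.sum_mul_sum]
        rw [integral_finsetSum _ fun a _ => integrable_finsetSum _ fun v _ => habs a v]
        simp_rw [integral_finsetSum _ fun v _ => habs _ v]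

variable {𝒜 : Type*} [Fintype 𝒜] {f : Ω → 𝒜 → ℝ}

noncomputable def meanL1Deviation (μ : Measure Ω) (f : Ω → 𝒜 → ℝ) (y : Ω) : ℝ :=
  ∫ y', ∑ a, |f y a - f y' a| ∂μ

lemma meanL1Deviation_nonneg (y : Ω) : 0 ≤ meanL1Deviation μ f y :=
  integral_nonneg fun _ => by positivity

lemma measurable_meanL1Deviation [SFinite μ] (hf : ∀ a, Measurable fun y => f y a) :
    Measurable (meanL1Deviation μ f) :=
  (StronglyMeasurable.integral_prod_right' (f := fun p : Ω × Ω => ∑ a, |f p.1 a - f p.2 a|)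
    (Finset.measurable_sum _ fun a _ =>
      (((hf a).comp measurable_fst).sub ((hf a).comp measurable_snd)).abs).stronglyMeasurable
    ).measurable

lemma abs_meanL1Deviation_le [IsProbabilityMeasure μ] {C : ℝ} (hC : ∀ y a, |f y a| ≤ C)
    (y : Ω) : |meanL1Deviation μ f y| ≤ Fintype.card 𝒜 * (C + C) := by
  have hbound : ∀ y', ‖∑ a, |f y a - f y' a|‖ ≤ Fintype.card 𝒜 * (C + C) := fun y' => by
    rw [Real.norm_eq_abs, abs_of_nonneg (by positivity)]
    calc ∑ a, |f y a - f y' a| ≤ ∑ _a : 𝒜, (C + C) :=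
          Finset.sum_le_sum fun a _ => (abs_sub _ _).trans (add_le_add (hC y a) (hC y' a))
      _ = Fintype.card 𝒜 * (C + C) := by simp [mul_add]
  have h := norm_integral_le_of_norm_le_const (μ := μ) (ae_of_all _ hbound)
  rwa [probReal_univ, mul_one, Real.norm_eq_abs] at h

lemma sum_abs_sub_integral_le_meanL1Deviation [IsProbabilityMeasure μ]
    (hf : ∀ a, Integrable (fun y => f y a) μ) (y : Ω) :
    ∑ a, |f y a - ∫ y', f y' a ∂μ| ≤ meanL1Deviation μ f y := by
  rw [meanL1Deviation, integral_finsetSum]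
  · exact Finset.sum_le_sum fun a _ => abs_sub_integral_le_integral_abs_sub (hf a) _
  · exact fun a _ => ((integrable_const _).sub (hf a)).abs

end

/-- Covariance-type inequality: the summed absolute covariances of bounded measurable
coordinate functions are bounded by the integral of the product of the mean ℓ1
deviations from their averages. -/
theorem covariance_type_inequality
    {Ω' : Type*} [MeasurableSpace Ω'] (μ : Measure Ω') [IsProbabilityMeasure μ]
    {𝒜 𝒱 : Type*} [Fintype 𝒜] [Fintype 𝒱]
    (f : Ω' → 𝒜 → ℝ) (g : Ω' → 𝒱 → ℝ)
    (hfm : ∀ a : 𝒜, Measurable fun y => f y a)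
    (hgm : ∀ v : 𝒱, Measurable fun y => g y v)
    (hfb : ∃ Cf : ℝ, ∀ y a, |f y a| ≤ Cf)
    (hgb : ∃ Cg : ℝ, ∀ y v, |g y v| ≤ Cg) :
    ∑ a : 𝒜, ∑ v : 𝒱,
        |∫ y, (f y a - ∫ y', f y' a ∂μ) * (g y v - ∫ y', g y' v ∂μ) ∂μ|
      ≤ ∫ y, (∫ y', ∑ a : 𝒜, |f y a - f y' a| ∂μ)
              * (∫ y', ∑ v : 𝒱, |g y v - g y' v| ∂μ) ∂μ := by
  obtain ⟨Cf, hCf⟩ := hfb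
  obtain ⟨Cg, hCg⟩ := hgb
  have hfi : ∀ a, Integrable (fun y => f y a) μ := fun a =>
    .of_bound (hfm a).aestronglyMeasurable Cf (ae_of_all _ (hCf · a))
  have hgi : ∀ v, Integrable (fun y => g y v) μ := fun v =>
    .of_bound (hgm v).aestronglyMeasurable Cg (ae_of_all _ (hCg · v))
  have hcentered : ∀ a v, Integrable (fun y =>
      (f y a - ∫ y', f y' a ∂μ) * (g y v - ∫ y', g y' v ∂μ)) μ := fun a v =>
    integrable_mul_of_abs_le ((hfm a).sub_const _) ((hgm v).sub_const _)
      (fun y => (abs_sub _ _).trans (add_le_add_left (hCf y a) _))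
      (fun y => (abs_sub _ _).trans (add_le_add_left (hCg y v) _))
  calc _ ≤ ∫ y, (∑ a, |f y a - ∫ y', f y' a ∂μ|) * ∑ v, |g y v - ∫ y', g y' v ∂μ| ∂μ :=
        sum_sum_abs_integral_mul_le_integral_mul_sum_abs hcentered
    _ ≤ ∫ y, meanL1Deviation μ f y * meanL1Deviation μ g y ∂μ :=
        integral_mono_of_nonneg (ae_of_all _ fun _ => by positivity)
          (integrable_mul_of_abs_le (measurable_meanL1Deviation hfm)
            (measurable_meanL1Deviation hgm) (abs_meanL1Deviation_le hCf)
            (abs_meanL1Deviation_le hCg))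
          (ae_of_all _ fun y => mul_le_mul (sum_abs_sub_integral_le_meanL1Deviation hfi y)
            (sum_abs_sub_integral_le_meanL1Deviation hgi y) (by positivity)
            (meanL1Deviation_nonneg y))
end

section
/- Let 𝒜 and 𝒱 be finite types, L ≥ 0, and let h : ℝ → (𝒜 × 𝒱 → ℝ) be such that for every y, h(y) is a probability mass function (h(y)(a,v) ≥ 0 for all (a,v) and ∑_{a,v} h(y)(a,v) = 1), and h is L-Lipschitz in ℓ1 norm: ∑_{(a,v)} |h(y)(a,v) − h(y')(a,v)| ≤ L·|y − y'| for all y, y' ∈ ℝ. Define the marginals hᴬ(y)(a) = ∑_{v} h(y)(a,v) and hⱽ(y)(v) = ∑_{a} h(y)(a,v), and the independence deviation D(y) = ∑_{(a,v)} |h(y)(a,v) − hᴬ(y)(a)·hⱽ(y)(v)|. Then D is 3L-Lipschitz: |D(y) − D(y')| ≤ 3L·|y − y'| for all y, y' ∈ ℝ. -/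
/-- If `h y` is a probability mass function on `𝒜 × 𝒱` for every `y`, and `h` is
`L`-Lipschitz in ℓ1 norm, then the ℓ1 deviation of `h y` from the product of its
marginals is `3L`-Lipschitz in `y`. -/
theorem independence_deviation_lipschitz
    {𝒜 𝒱 : Type*} [Fintype 𝒜] [Fintype 𝒱]
    (L : ℝ) (hL : 0 ≤ L)
    (h : ℝ → 𝒜 × 𝒱 → ℝ)
    (hpos : ∀ y p, 0 ≤ h y p)
    (hsum : ∀ y, ∑ p : 𝒜 × 𝒱, h y p = 1)
    (hLip : ∀ y y' : ℝ, ∑ p : 𝒜 × 𝒱, |h y p - h y' p| ≤ L * |y - y'|) :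
    ∀ y y' : ℝ,
      |(∑ p : 𝒜 × 𝒱, |h y p - (∑ v : 𝒱, h y (p.1, v)) * (∑ a : 𝒜, h y (a, p.2))|)
        - (∑ p : 𝒜 × 𝒱, |h y' p - (∑ v : 𝒱, h y' (p.1, v)) * (∑ a : 𝒜, h y' (a, p.2))|)|
      ≤ 3 * L * |y - y'| := by
  intro y y'
  set A : ℝ → 𝒜 → ℝ := fun z a => ∑ v : 𝒱, h z (a, v) with hAdef
  set V : ℝ → 𝒱 → ℝ := fun z v => ∑ a : 𝒜, h z (a, v) with hVdef
  have hApos : ∀ z a, 0 ≤ A z a := fun z a => Finset.sum_nonneg fun v _ => hpos z _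
  have hVpos : ∀ z v, 0 ≤ V z v := fun z v => Finset.sum_nonneg fun a _ => hpos z _
  have hAsum : ∀ z, ∑ a : 𝒜, A z a = 1 := by
    intro z
    rw [← hsum z, Fintype.sum_prod_type]
  have hVsum : ∀ z, ∑ v : 𝒱, V z v = 1 := by
    intro z
    rw [← hsum z, Fintype.sum_prod_type]
    exact Finset.sum_comm
  have hALip : ∑ a : 𝒜, |A y a - A y' a| ≤ L * |y - y'| := by
    calc ∑ a : 𝒜, |A y a - A y' a|
        = ∑ a : 𝒜, |∑ v : 𝒱, (h y (a, v) - h y' (a, v))| := by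
          refine Finset.sum_congr rfl fun a _ => ?_
          rw [Finset.sum_sub_distrib]
      _ ≤ ∑ a : 𝒜, ∑ v : 𝒱, |h y (a, v) - h y' (a, v)| :=
          Finset.sum_le_sum fun a _ => Finset.abs_sum_le_sum_abs _ _
      _ = ∑ p : 𝒜 × 𝒱, |h y p - h y' p| := (Fintype.sum_prod_type (fun p : 𝒜 × 𝒱 => |h y p - h y' p|)).symm
      _ ≤ L * |y - y'| := hLip y y'
  have hVLip : ∑ v : 𝒱, |V y v - V y' v| ≤ L * |y - y'| := by
    calc ∑ v : 𝒱, |V y v - V y' v|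
        = ∑ v : 𝒱, |∑ a : 𝒜, (h y (a, v) - h y' (a, v))| := by
          refine Finset.sum_congr rfl fun v _ => ?_
          rw [Finset.sum_sub_distrib]
      _ ≤ ∑ v : 𝒱, ∑ a : 𝒜, |h y (a, v) - h y' (a, v)| :=
          Finset.sum_le_sum fun v _ => Finset.abs_sum_le_sum_abs _ _
      _ = ∑ a : 𝒜, ∑ v : 𝒱, |h y (a, v) - h y' (a, v)| := Finset.sum_comm
      _ = ∑ p : 𝒜 × 𝒱, |h y p - h y' p| := (Fintype.sum_prod_type (fun p : 𝒜 × 𝒱 => |h y p - h y' p|)).symm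
      _ ≤ L * |y - y'| := hLip y y'
  have hProd : ∑ p : 𝒜 × 𝒱, |A y p.1 * V y p.2 - A y' p.1 * V y' p.2|
      ≤ 2 * L * |y - y'| := by
    have step : ∀ p : 𝒜 × 𝒱, |A y p.1 * V y p.2 - A y' p.1 * V y' p.2|
        ≤ |A y p.1 - A y' p.1| * V y p.2 + A y' p.1 * |V y p.2 - V y' p.2| := by
      intro p
      have : A y p.1 * V y p.2 - A y' p.1 * V y' p.2
          = (A y p.1 - A y' p.1) * V y p.2 + A y' p.1 * (V y p.2 - V y' p.2) := by ring
      rw [this]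
      calc |(A y p.1 - A y' p.1) * V y p.2 + A y' p.1 * (V y p.2 - V y' p.2)|
          ≤ |(A y p.1 - A y' p.1) * V y p.2| + |A y' p.1 * (V y p.2 - V y' p.2)| :=
            abs_add_le _ _
        _ = |A y p.1 - A y' p.1| * V y p.2 + A y' p.1 * |V y p.2 - V y' p.2| := by
            rw [abs_mul, abs_mul, abs_of_nonneg (hVpos y p.2), abs_of_nonneg (hApos y' p.1)]
    calc ∑ p : 𝒜 × 𝒱, |A y p.1 * V y p.2 - A y' p.1 * V y' p.2|
        ≤ ∑ p : 𝒜 × 𝒱, (|A y p.1 - A y' p.1| * V y p.2 + A y' p.1 * |V y p.2 - V y' p.2|) :=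
          Finset.sum_le_sum fun p _ => step p
      _ = (∑ a : 𝒜, |A y a - A y' a|) * (∑ v : 𝒱, V y v)
          + (∑ a : 𝒜, A y' a) * (∑ v : 𝒱, |V y v - V y' v|) := by
          rw [Finset.sum_add_distrib, Finset.sum_mul_sum, Finset.sum_mul_sum,
            Fintype.sum_prod_type, Fintype.sum_prod_type]
      _ = (∑ a : 𝒜, |A y a - A y' a|) + (∑ v : 𝒱, |V y v - V y' v|) := by
          rw [hVsum, hAsum, mul_one, one_mul]
      _ ≤ L * |y - y'| + L * |y - y'| := add_le_add hALip hVLip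
      _ = 2 * L * |y - y'| := by ring
  calc |(∑ p : 𝒜 × 𝒱, |h y p - A y p.1 * V y p.2|)
        - (∑ p : 𝒜 × 𝒱, |h y' p - A y' p.1 * V y' p.2|)|
      = |∑ p : 𝒜 × 𝒱, (|h y p - A y p.1 * V y p.2| - |h y' p - A y' p.1 * V y' p.2|)| := by
        rw [Finset.sum_sub_distrib]
    _ ≤ ∑ p : 𝒜 × 𝒱, abs (|h y p - A y p.1 * V y p.2| - |h y' p - A y' p.1 * V y' p.2|) :=
        Finset.abs_sum_le_sum_abs _ _
    _ ≤ ∑ p : 𝒜 × 𝒱, |(h y p - A y p.1 * V y p.2) - (h y' p - A y' p.1 * V y' p.2)| :=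
        Finset.sum_le_sum fun p _ => abs_abs_sub_abs_le_abs_sub _ _
    _ ≤ ∑ p : 𝒜 × 𝒱, (|h y p - h y' p| + |A y p.1 * V y p.2 - A y' p.1 * V y' p.2|) := by
        refine Finset.sum_le_sum fun p _ => ?_
        have : (h y p - A y p.1 * V y p.2) - (h y' p - A y' p.1 * V y' p.2)
            = (h y p - h y' p) - (A y p.1 * V y p.2 - A y' p.1 * V y' p.2) := by ring
        rw [this]
        exact abs_sub _ _
    _ = (∑ p : 𝒜 × 𝒱, |h y p - h y' p|)
        + ∑ p : 𝒜 × 𝒱, |A y p.1 * V y p.2 - A y' p.1 * V y' p.2| :=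
        Finset.sum_add_distrib
    _ ≤ L * |y - y'| + 2 * L * |y - y'| := add_le_add (hLip y y') hProd
    _ = 3 * L * |y - y'| := by ring
end

section
/- Let n : ℕ, let s : Fin (n+1) → ℝ be injective, let β ∈ [0,1], and set k = ⌈β·(n+1)⌉ (the natural-number ceiling). Then β ≤ ( the number of permutations σ of Fin (n+1) with card { j : Fin (n+1) | s(j) ≤ s(σ(Fin.last n)) } ≤ k ) / (n+1)! ≤ β + 1/(n+1). -/
/-!
Since the scores are distinct, the rank `#{j | s j ≤ s i}` is a bijection onto `{1, …, n+1}`,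
so exactly `k` indices have rank at most `k`. By symmetry `σ (Fin.last n)` is uniformly
distributed over the indices, hence the fraction of good permutations is
`k / (n+1) = ⌈β(n+1)⌉ / (n+1)`, which lies in `[β, β + 1/(n+1)]`.
-/

open Finset Equiv Nat

section Perm

variable {ι : Type*} [Fintype ι] [DecidableEq ι]

lemma card_mul_card_filter_perm_apply_eq (a i : ι) :
    Fintype.card ι * #{σ : Perm ι | σ a = i} = (Fintype.card ι)! := by
  have fiber_eq (j : ι) : #{σ : Perm ι | σ a = j} = #{σ : Perm ι | σ a = i} :=
    card_nbij' (swap j i * ·) (swap j i * ·) (fun σ _ => by simp_all) (fun σ _ => by simp_all)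
      (fun σ _ => swap_mul_self_mul j i σ) (fun σ _ => swap_mul_self_mul j i σ)
  calc Fintype.card ι * #{σ : Perm ι | σ a = i}
      = ∑ j, #{σ : Perm ι | σ a = j} := by simp [fiber_eq]
    _ = #(univ : Finset (Perm ι)) := (card_eq_sum_card_fiberwise (by simp)).symm
    _ = (Fintype.card ι)! := by rw [Finset.card_univ, Fintype.card_perm]

lemma card_mul_card_filter_perm_apply_mem (a : ι) (A : Finset ι) :
    Fintype.card ι * #{σ : Perm ι | σ a ∈ A} = #A * (Fintype.card ι)! := by
  have fiber_eq (i : ι) (hi : i ∈ A) :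
      #{σ ∈ ({σ | σ a ∈ A} : Finset (Perm ι)) | σ a = i} = #{σ : Perm ι | σ a = i} := by
    congr 1
    ext σ
    simp +contextual [hi]
  rw [card_eq_sum_card_fiberwise (f := (· a)) (t := A) (fun σ hσ => by simpa using hσ), mul_sum,
    sum_congr rfl fun i hi => by rw [fiber_eq i hi, card_mul_card_filter_perm_apply_eq],
    sum_const, smul_eq_mul]

end Perm

section Rank

variable {ι α : Type*} [Fintype ι] [LinearOrder α]

abbrev scoreRank (s : ι → α) (i : ι) : ℕ := #{j | s j ≤ s i}

lemma scoreRank_lt_scoreRank {s : ι → α} {i j : ι} (h : s i < s j) :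
    scoreRank s i < scoreRank s j :=
  card_lt_card <| (ssubset_iff_of_subset <| monotone_filter_right _ fun _ _ hx => hx.trans h.le).2
    ⟨j, by simp [h]⟩

lemma scoreRank_injective {s : ι → α} (hs : Function.Injective s) :
    Function.Injective (scoreRank s) := by
  intro i j hij
  by_contra hne
  rcases (hs.ne hne).lt_or_gt with h | h
  · exact (scoreRank_lt_scoreRank h).ne hij
  · exact (scoreRank_lt_scoreRank h).ne' hij

lemma scoreRank_mem_Icc (s : ι → α) (i : ι) : scoreRank s i ∈ Icc 1 (Fintype.card ι) :=
  mem_Icc.2 ⟨card_pos.2 ⟨i, by simp⟩, card_filter_le _ _⟩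

lemma image_scoreRank {s : ι → α} (hs : Function.Injective s) :
    univ.image (scoreRank s) = Icc 1 (Fintype.card ι) :=
  eq_of_subset_of_card_le (fun _ hm => by
      obtain ⟨i, -, rfl⟩ := mem_image.1 hm
      exact scoreRank_mem_Icc s i)
    (by rw [card_image_of_injective _ (scoreRank_injective hs), Nat.card_Icc, Finset.card_univ,
      Nat.add_sub_cancel])

lemma card_filter_scoreRank_le {s : ι → α} (hs : Function.Injective s) {k : ℕ}
    (hk : k ≤ Fintype.card ι) : #{i | scoreRank s i ≤ k} = k := by
  rw [← card_image_of_injective _ (scoreRank_injective hs),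
    ← filter_image (p := (· ≤ k)), image_scoreRank hs]
  have : {m ∈ Icc 1 (Fintype.card ι) | m ≤ k} = Icc 1 k := by
    ext m
    simp only [mem_filter, mem_Icc]
    omega
  rw [this, Nat.card_Icc, Nat.add_sub_cancel]

end Rank

lemma le_natCeil_mul_div_and_le {β m : ℝ} (hβ : 0 ≤ β) (hm : 0 < m) :
    β ≤ ⌈β * m⌉₊ / m ∧ ⌈β * m⌉₊ / m ≤ β + 1 / m := by
  constructor
  · exact (le_div_iff₀ hm).2 (Nat.le_ceil _)
  · rw [div_le_iff₀ hm, add_mul, one_div_mul_cancel hm.ne']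
    exact (Nat.ceil_lt_add_one (by positivity)).le

/-- Deterministic permutation form of the split conformal coverage guarantee: for
distinct scores, the fraction of permutations under which the last-position score has
rank at most `k = ⌈β(n+1)⌉` lies between `β` and `β + 1/(n+1)`. -/
theorem conformal_permutation_coverage
    (n : ℕ) (s : Fin (n + 1) → ℝ) (hs : Function.Injective s)
    (β : ℝ) (hβ : β ∈ Set.Icc (0 : ℝ) 1)
    (k : ℕ) (hk : k = ⌈β * (n + 1)⌉₊) :
    β ≤ ((Finset.univ.filter (fun σ : Equiv.Perm (Fin (n + 1)) =>
            (Finset.univ.filter (fun j : Fin (n + 1) =>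
              s j ≤ s (σ (Fin.last n)))).card ≤ k)).card : ℝ)
          / (Nat.factorial (n + 1)) ∧
    ((Finset.univ.filter (fun σ : Equiv.Perm (Fin (n + 1)) =>
        (Finset.univ.filter (fun j : Fin (n + 1) =>
          s j ≤ s (σ (Fin.last n)))).card ≤ k)).card : ℝ)
        / (Nat.factorial (n + 1))
      ≤ β + 1 / (n + 1) := by
  have hk_le : k ≤ n + 1 := by
    rw [hk, Nat.ceil_le]
    push_cast
    exact mul_le_of_le_one_left (by positivity) hβ.2
  have hcount : (n + 1) * #{σ : Perm (Fin (n + 1)) | scoreRank s (σ (Fin.last n)) ≤ k}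
      = k * (n + 1)! := by
    simpa [card_filter_scoreRank_le hs (k := k) (by simpa using hk_le)] using
      card_mul_card_filter_perm_apply_mem (Fin.last n) {i | scoreRank s i ≤ k}
  have hratio : (#{σ : Perm (Fin (n + 1)) | scoreRank s (σ (Fin.last n)) ≤ k} : ℝ) / (n + 1)!
      = k / (n + 1) := by
    rw [div_eq_div_iff (by positivity) (by positivity)]
    exact_mod_cast (mul_comm _ _).trans hcount
  rw [hratio, hk]
  exact_mod_cast le_natCeil_mul_div_and_le hβ.1 (by positivity : (0 : ℝ) < n + 1)
end

section
/- Let (Ω, P) be a probability space, n : ℕ, and S : Fin (n+1) → Ω → ℝ a family of measurable random variables that is exchangeable: for every permutation π of Fin (n+1), the pushforward law of the map ω ↦ (i ↦ S(π(i))(ω)) on the space Fin (n+1) → ℝ equals the pushforward law of ω ↦ (i ↦ S(i)(ω)). Assume the values are almost surely distinct: P( { ω | ∃ i ≠ j, S(i)(ω) = S(j)(ω) } ) = 0. Then for every natural number k with 1 ≤ k ≤ n+1: P( { ω | card { j : Fin (n+1) | S(j)(ω) ≤ S(Fin.last n)(ω) } ≤ k } ) = k/(n+1). -/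
/-!
Let `rank x i` be the number of coordinates of `x` that are `≤ x i`. Exchangeability makes the law
of `rank X i` the same for every `i`, so `(n + 1) · P(rank X last ≤ k) = E #{i | rank X i ≤ k}`.
When the coordinates are distinct, the ranks are a permutation of `1, …, n + 1`, so this count is
exactly `k`.
-/

open MeasureTheory
open scoped Classical

namespace Conformal

open Finset

section Combinatorics

variable {ι α : Type*} [Fintype ι] [LinearOrder α]

def rank (x : ι → α) (i : ι) : ℕ := #{j | x j ≤ x i}

lemma rank_mem_Icc (x : ι → α) (i : ι) : rank x i ∈ Icc 1 (Fintype.card ι) :=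
  mem_Icc.2 ⟨card_pos.2 ⟨i, by simp⟩, card_filter_le _ _⟩

lemma rank_comp_perm (x : ι → α) (π : Equiv.Perm ι) (i : ι) :
    rank (x ∘ π) i = rank x (π i) :=
  card_bij' (fun j _ => π j) (fun j _ => π.symm j) (by simp) (by simp) (by simp) (by simp)

lemma rank_lt_rank {x : ι → α} {i j : ι} (h : x i < x j) : rank x i < rank x j := by
  refine card_lt_card ⟨fun a ha => ?_, fun hsub => ?_⟩
  · simp only [mem_filter, mem_univ, true_and] at ha ⊢
    exact ha.trans h.le
  · have := hsub (by simp : j ∈ ({a | x a ≤ x j} : Finset ι))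
    simp only [mem_filter, mem_univ, true_and] at this
    exact this.not_gt h

lemma rank_injective {x : ι → α} (hx : Function.Injective x) : Function.Injective (rank x) := by
  intro i j hij
  by_contra hne
  rcases (hx.ne hne).lt_or_gt with h | h
  · exact (rank_lt_rank h).ne hij
  · exact (rank_lt_rank h).ne' hij

lemma image_rank {x : ι → α} (hx : Function.Injective x) :
    univ.image (rank x) = Icc 1 (Fintype.card ι) :=
  eq_of_subset_of_card_le (image_subset_iff.2 fun i _ => rank_mem_Icc x i)
    (by simp [card_image_of_injective _ (rank_injective hx)])

lemma card_rank_le {x : ι → α} (hx : Function.Injective x) {k : ℕ} (hk : k ≤ Fintype.card ι) :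
    #{i | rank x i ≤ k} = k := by
  calc #{i | rank x i ≤ k}
      = #(({i | rank x i ≤ k} : Finset ι).image (rank x)) :=
        (card_image_of_injective _ (rank_injective hx)).symm
    _ = #{m ∈ Icc 1 (Fintype.card ι) | m ≤ k} := by rw [← image_rank hx, filter_image]
    _ = #(Icc 1 k) := by congr 1; ext m; simp only [mem_filter, mem_Icc]; omega
    _ = k := by simp

end Combinatorics

section Probability

variable {ι α Ω : Type*} [Fintype ι] [LinearOrder α] [MeasurableSpace α]
  [TopologicalSpace α] [OrderClosedTopology α] [SecondCountableTopology α] [OpensMeasurableSpace α]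
  [MeasurableSpace Ω] {μ : Measure Ω}

lemma measurable_rank (i : ι) : Measurable fun x : ι → α => rank x i := by
  simp_rw [rank, card_filter]
  exact Finset.measurable_sum _ fun j _ => Measurable.ite
    (measurableSet_le (measurable_pi_apply j) (measurable_pi_apply i)) measurable_const
    measurable_const

lemma measure_rank_le_eq_of_exchangeable {X : Ω → ι → α} (hX : Measurable X)
    (hexch : ∀ π : Equiv.Perm ι, μ.map (fun ω => X ω ∘ π) = μ.map X) (i j : ι) (k : ℕ) :
    μ {ω | rank (X ω) i ≤ k} = μ {ω | rank (X ω) j ≤ k} := by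
  have hset : MeasurableSet {x : ι → α | rank x j ≤ k} := measurable_rank j measurableSet_Iic
  have hXπ : Measurable fun ω => X ω ∘ Equiv.swap i j :=
    measurable_pi_lambda _ fun l => measurable_pi_apply _ |>.comp hX
  have := congrArg (· {x : ι → α | rank x j ≤ k}) (hexch (Equiv.swap i j))
  simp only [Measure.map_apply hXπ hset, Measure.map_apply hX hset] at this
  simpa [Set.preimage, rank_comp_perm] using this

lemma sum_measure_rank_le {X : Ω → ι → α} (hX : Measurable X)
    (hinj : ∀ᵐ ω ∂μ, Function.Injective (X ω)) {k : ℕ} (hk : k ≤ Fintype.card ι) :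
    ∑ i, μ {ω | rank (X ω) i ≤ k} = k * μ Set.univ := by
  have hmeas i : MeasurableSet {ω | rank (X ω) i ≤ k} :=
    hX (measurable_rank i measurableSet_Iic)
  calc ∑ i, μ {ω | rank (X ω) i ≤ k}
      = ∫⁻ ω, ∑ i, {ω | rank (X ω) i ≤ k}.indicator 1 ω ∂μ := by
        rw [lintegral_finsetSum _ fun i _ => measurable_one.indicator (hmeas i)]
        simp_rw [lintegral_indicator_one (hmeas _)]
    _ = ∫⁻ _, (k : ENNReal) ∂μ := by
        refine lintegral_congr_ae (hinj.mono fun ω hω => ?_)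
        simp [Set.indicator_apply, card_rank_le hω hk]
    _ = k * μ Set.univ := lintegral_const _

lemma measure_rank_le_eq_div [IsProbabilityMeasure μ] {X : Ω → ι → α} (hX : Measurable X)
    (hexch : ∀ π : Equiv.Perm ι, μ.map (fun ω => X ω ∘ π) = μ.map X)
    (hinj : ∀ᵐ ω ∂μ, Function.Injective (X ω)) (i : ι) {k : ℕ} (hk : k ≤ Fintype.card ι) :
    μ {ω | rank (X ω) i ≤ k} = k / Fintype.card ι := by
  have hsum := sum_measure_rank_le hX hinj hk
  simp only [measure_rank_le_eq_of_exchangeable hX hexch _ i, sum_const, card_univ,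
    nsmul_eq_mul, measure_univ, mul_one] at hsum
  have hcard : (Fintype.card ι : ENNReal) ≠ 0 := by
    have : Nonempty ι := ⟨i⟩
    simp
  rw [ENNReal.eq_div_iff hcard (ENNReal.natCast_ne_top _), hsum]

end Probability

end Conformal

/-- For exchangeable random variables with almost surely distinct values, the rank of the
last one among all `n+1` is uniformly distributed: the probability that it is at most `k`
equals `k/(n+1)` for every `1 ≤ k ≤ n+1`. -/
theorem exchangeable_rank_uniform
    {Ω : Type*} [MeasurableSpace Ω] (μ : Measure Ω) [IsProbabilityMeasure μ]
    (n : ℕ) (S : Fin (n + 1) → Ω → ℝ)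
    (hmeas : ∀ i, Measurable (S i))
    (hexch : ∀ π : Equiv.Perm (Fin (n + 1)),
      Measure.map (fun ω => fun i => S (π i) ω) μ
        = Measure.map (fun ω => fun i => S i ω) μ)
    (hdist : μ {ω | ∃ i j : Fin (n + 1), i ≠ j ∧ S i ω = S j ω} = 0) :
    ∀ k : ℕ, 1 ≤ k → k ≤ n + 1 →
      μ {ω | (Finset.univ.filter (fun j : Fin (n + 1) =>
          S j ω ≤ S (Fin.last n) ω)).card ≤ k}
        = (k : ENNReal) / (n + 1) := by
  intro k _ hk
  have hinj : ∀ᵐ ω ∂μ, Function.Injective fun i => S i ω := by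
    rw [ae_iff]
    simpa only [Function.not_injective_iff, and_comm, ne_comm] using hdist
  have hrank := Conformal.measure_rank_le_eq_div (measurable_pi_lambda _ hmeas) hexch hinj
    (Fin.last n) (k := k) (by simpa using hk)
  rwa [Fintype.card_fin, Nat.cast_add_one] at hrank
end

section
/- Let (Ω, P) be a probability space, n : ℕ, and S : Fin (n+1) → Ω → ℝ exchangeable (for every permutation π of Fin (n+1), the pushforward law of ω ↦ (i ↦ S(π(i))(ω)) equals that of ω ↦ (i ↦ S(i)(ω))) with almost surely distinct values (P(∃ i ≠ j, S(i) = S(j)) = 0). Let β ∈ [0,1] and k = ⌈β·(n+1)⌉. Then β ≤ P( { ω | card { j : Fin (n+1) | S(j)(ω) ≤ S(Fin.last n)(ω) } ≤ k } ) ≤ β + 1/(n+1). -/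
open MeasureTheory
open scoped Classical ENNReal

private lemma rank_count (n k : ℕ) (f : Fin (n + 1) → ℝ)
    (hf : ∀ i j : Fin (n + 1), i ≠ j → f i ≠ f j) :
    (Finset.univ.filter (fun i : Fin (n + 1) =>
      (Finset.univ.filter (fun j : Fin (n + 1) => f j ≤ f i)).card ≤ k)).card
      = min k (n + 1) := by
  set R : Fin (n + 1) → ℕ :=
    fun i => (Finset.univ.filter (fun j : Fin (n + 1) => f j ≤ f i)).card with hR
  have hmono : ∀ i j : Fin (n + 1), f i < f j → R i < R j := by
    intro i j hij
    apply Finset.card_lt_card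
    have hsub : Finset.univ.filter (fun l : Fin (n + 1) => f l ≤ f i)
        ⊆ Finset.univ.filter (fun l : Fin (n + 1) => f l ≤ f j) := by
      intro l hl
      simp only [Finset.mem_filter, Finset.mem_univ, true_and] at hl ⊢
      exact hl.trans hij.le
    refine (Finset.ssubset_iff_of_subset hsub).mpr ⟨j, ?_, ?_⟩
    · simp
    · simp [not_le.mpr hij]
  have hinj : Function.Injective R := by
    intro a b hab
    by_contra hne
    rcases lt_or_gt_of_ne (hf a b hne) with h | h
    · exact absurd hab (Nat.ne_of_lt (hmono a b h))
    · exact absurd hab (Nat.ne_of_gt (hmono b a h))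
  have h1le : ∀ i, 1 ≤ R i := by
    intro i
    exact Finset.card_pos.mpr ⟨i, by simp⟩
  have hle : ∀ i, R i ≤ n + 1 := by
    intro i
    calc R i ≤ Finset.univ.card := Finset.card_filter_le _ _
    _ = n + 1 := by simp
  have himg : Finset.univ.image R = Finset.Icc 1 (n + 1) := by
    apply Finset.eq_of_subset_of_card_le
    · intro m hm
      obtain ⟨i, _, rfl⟩ := Finset.mem_image.mp hm
      exact Finset.mem_Icc.mpr ⟨h1le i, hle i⟩
    · rw [Finset.card_image_of_injective _ hinj, Nat.card_Icc, Finset.card_univ]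
      simp
  calc (Finset.univ.filter (fun i : Fin (n + 1) => R i ≤ k)).card
      = ((Finset.univ.filter (fun i : Fin (n + 1) => R i ≤ k)).image R).card :=
        (Finset.card_image_of_injective _ hinj).symm
    _ = ((Finset.univ.image R).filter (fun m => m ≤ k)).card := by
        rw [Finset.filter_image]
    _ = ((Finset.Icc 1 (n + 1)).filter (fun m => m ≤ k)).card := by rw [himg]
    _ = (Finset.Icc 1 (min k (n + 1))).card := by
        congr 1
        ext m
        simp only [Finset.mem_filter, Finset.mem_Icc]
        omega
    _ = min k (n + 1) := by rw [Nat.card_Icc]; omega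

/-- Bin coverage guarantee in probabilistic form: for exchangeable, almost surely
distinct conformity scores, the probability that the last score ranks among the
`⌈β(n+1)⌉` smallest lies between `β` and `β + 1/(n+1)`. -/
theorem exchangeable_conformal_coverage
    {Ω : Type*} [MeasurableSpace Ω] (μ : Measure Ω) [IsProbabilityMeasure μ]
    (n : ℕ) (S : Fin (n + 1) → Ω → ℝ)
    (hmeas : ∀ i, Measurable (S i))
    (hexch : ∀ π : Equiv.Perm (Fin (n + 1)),
      Measure.map (fun ω => fun i => S (π i) ω) μ
        = Measure.map (fun ω => fun i => S i ω) μ)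
    (hdist : μ {ω | ∃ i j : Fin (n + 1), i ≠ j ∧ S i ω = S j ω} = 0)
    (β : ℝ) (hβ : β ∈ Set.Icc (0 : ℝ) 1)
    (k : ℕ) (hk : k = ⌈β * (n + 1)⌉₊) :
    β ≤ (μ {ω | (Finset.univ.filter (fun j : Fin (n + 1) =>
            S j ω ≤ S (Fin.last n) ω)).card ≤ k}).toReal ∧
    (μ {ω | (Finset.univ.filter (fun j : Fin (n + 1) =>
        S j ω ≤ S (Fin.last n) ω)).card ≤ k}).toReal ≤ β + 1 / (n + 1) := by
  obtain ⟨hβ0, hβ1⟩ := hβ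
  -- the rank events
  set A : Fin (n + 1) → Set Ω := fun i =>
    {ω | (Finset.univ.filter (fun j : Fin (n + 1) => S j ω ≤ S i ω)).card ≤ k} with hA
  have hIick : MeasurableSet (Set.Iic k) := (Set.finite_Iic k).measurableSet
  have hRmeas : ∀ i : Fin (n + 1), Measurable (fun ω =>
      (Finset.univ.filter (fun j : Fin (n + 1) => S j ω ≤ S i ω)).card) := by
    intro i
    have heq : (fun ω => (Finset.univ.filter
        (fun j : Fin (n + 1) => S j ω ≤ S i ω)).card)
        = fun ω => ∑ j : Fin (n + 1), if S j ω ≤ S i ω then 1 else 0 := by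
      funext ω; rw [Finset.card_filter]
    rw [heq]
    exact Finset.measurable_sum _ fun j _ =>
      Measurable.ite (measurableSet_le (hmeas j) (hmeas i))
        measurable_const measurable_const
  have hAmeas : ∀ i, MeasurableSet (A i) := fun i => (hRmeas i) hIick
  -- key: all events have the same probability
  have hV : Measurable (fun ω => fun i : Fin (n + 1) => S i ω) :=
    measurable_pi_lambda _ hmeas
  set B : Set (Fin (n + 1) → ℝ) :=
    {f | (Finset.univ.filter (fun j : Fin (n + 1) => f j ≤ f (Fin.last n))).card ≤ k}
    with hB
  have hBmeas : MeasurableSet B := by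
    have hg : Measurable (fun f : Fin (n + 1) → ℝ =>
        (Finset.univ.filter (fun j : Fin (n + 1) => f j ≤ f (Fin.last n))).card) := by
      have heq : (fun f : Fin (n + 1) → ℝ =>
          (Finset.univ.filter (fun j : Fin (n + 1) => f j ≤ f (Fin.last n))).card)
          = fun f => ∑ j : Fin (n + 1), if f j ≤ f (Fin.last n) then 1 else 0 := by
        funext f; rw [Finset.card_filter]
      rw [heq]
      exact Finset.measurable_sum _ fun j _ =>
        Measurable.ite (measurableSet_le (measurable_pi_apply _) (measurable_pi_apply _))
          measurable_const measurable_const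
    exact hg hIick
  have key : ∀ i : Fin (n + 1), μ (A i) = μ (A (Fin.last n)) := by
    intro i
    set π : Equiv.Perm (Fin (n + 1)) := Equiv.swap i (Fin.last n) with hπ
    have hVπ : Measurable (fun ω => fun j : Fin (n + 1) => S (π j) ω) :=
      measurable_pi_lambda _ fun j => hmeas _
    have hpre : A i = (fun ω => fun j : Fin (n + 1) => S (π j) ω) ⁻¹' B := by
      ext ω
      simp only [hA, hB, Set.mem_preimage, Set.mem_setOf_eq]
      have hπl : π (Fin.last n) = i := Equiv.swap_apply_right i (Fin.last n)
      simp only [hπl]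
      have hcard : (Finset.univ.filter (fun j : Fin (n + 1) => S (π j) ω ≤ S i ω)).card
          = (Finset.univ.filter (fun j : Fin (n + 1) => S j ω ≤ S i ω)).card := by
        have himg : Finset.univ.filter (fun j : Fin (n + 1) => S (π j) ω ≤ S i ω)
            = (Finset.univ.filter (fun j : Fin (n + 1) => S j ω ≤ S i ω)).map
              π.symm.toEmbedding := by
          ext j
          simp only [Finset.mem_filter, Finset.mem_univ, true_and, Finset.mem_map,
            Equiv.coe_toEmbedding]
          constructor
          · intro h; exact ⟨π j, h, Equiv.symm_apply_apply _ _⟩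
          · rintro ⟨a, ha, rfl⟩
            simpa using ha
        rw [himg, Finset.card_map]
      rw [hcard]
    calc μ (A i)
        = μ ((fun ω => fun j : Fin (n + 1) => S (π j) ω) ⁻¹' B) := by rw [hpre]
      _ = Measure.map (fun ω => fun j : Fin (n + 1) => S (π j) ω) μ B :=
          (Measure.map_apply hVπ hBmeas).symm
      _ = Measure.map (fun ω => fun j : Fin (n + 1) => S j ω) μ B := by rw [hexch π]
      _ = μ ((fun ω => fun j : Fin (n + 1) => S j ω) ⁻¹' B) :=
          Measure.map_apply hV hBmeas
      _ = μ (A (Fin.last n)) := rfl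
  -- sum of probabilities
  have hsum : ∑ i : Fin (n + 1), μ (A i) = ((min k (n + 1) : ℕ) : ℝ≥0∞) := by
    calc ∑ i : Fin (n + 1), μ (A i)
        = ∑ i : Fin (n + 1), ∫⁻ ω, (A i).indicator (fun _ => (1 : ℝ≥0∞)) ω ∂μ := by
          exact Finset.sum_congr rfl fun i _ => (lintegral_indicator_one (hAmeas i)).symm
      _ = ∫⁻ ω, ∑ i : Fin (n + 1), (A i).indicator (fun _ => (1 : ℝ≥0∞)) ω ∂μ :=
          (lintegral_finset_sum _ fun i _ =>
            (measurable_const.indicator (hAmeas i))).symm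
      _ = ∫⁻ _, ((min k (n + 1) : ℕ) : ℝ≥0∞) ∂μ := by
          refine lintegral_congr_ae ?_
          rw [Filter.EventuallyEq, ae_iff]
          refine measure_mono_null ?_ hdist
          intro ω hω
          simp only [Set.mem_setOf_eq] at hω ⊢
          by_contra hcon
          apply hω
          have hf : ∀ i j : Fin (n + 1), i ≠ j → S i ω ≠ S j ω := by
            intro i j hij heq2
            exact hcon ⟨i, j, hij, heq2⟩
          calc ∑ i : Fin (n + 1), (A i).indicator (fun _ => (1 : ℝ≥0∞)) ω
              = ∑ i : Fin (n + 1), if ω ∈ A i then (1 : ℝ≥0∞) else 0 := by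
                refine Finset.sum_congr rfl fun i _ => ?_
                rw [Set.indicator_apply]
            _ = ((Finset.univ.filter (fun i : Fin (n + 1) => ω ∈ A i)).card : ℝ≥0∞) :=
                Finset.sum_boole _ _
            _ = ((min k (n + 1) : ℕ) : ℝ≥0∞) := by
                norm_cast
                exact rank_count n k (fun i => S i ω) hf
      _ = ((min k (n + 1) : ℕ) : ℝ≥0∞) := by simp
  have hcount : (((n : ℕ) + 1 : ℕ) : ℝ≥0∞) * μ (A (Fin.last n))
      = ((min k (n + 1) : ℕ) : ℝ≥0∞) := by
    rw [← hsum, Finset.sum_congr rfl fun i _ => key i]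
    simp [Finset.card_univ, mul_comm]
  have hne0 : (((n : ℕ) + 1 : ℕ) : ℝ≥0∞) ≠ 0 := by positivity
  have hnetop : (((n : ℕ) + 1 : ℕ) : ℝ≥0∞) ≠ ⊤ := by simp
  have hAval : μ (A (Fin.last n))
      = ((min k (n + 1) : ℕ) : ℝ≥0∞) / (((n : ℕ) + 1 : ℕ) : ℝ≥0∞) := by
    exact (ENNReal.eq_div_iff hne0 hnetop).mpr hcount
  have hgoalset : {ω | (Finset.univ.filter (fun j : Fin (n + 1) =>
      S j ω ≤ S (Fin.last n) ω)).card ≤ k} = A (Fin.last n) := rfl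
  rw [hgoalset, hAval]
  have htoReal : (((min k (n + 1) : ℕ) : ℝ≥0∞) / (((n : ℕ) + 1 : ℕ) : ℝ≥0∞)).toReal
      = ((min k (n + 1) : ℕ) : ℝ) / ((n : ℝ) + 1) := by
    rw [ENNReal.toReal_div]
    norm_cast
  rw [htoReal]
  have hpos : (0 : ℝ) < (n : ℝ) + 1 := by positivity
  have hmincast : ((min k (n + 1) : ℕ) : ℝ) = min (k : ℝ) ((n : ℝ) + 1) := by
    push_cast [Nat.cast_min]
    ring_nf
  have hceil_ge : β * ((n : ℝ) + 1) ≤ (k : ℝ) := by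
    rw [hk]; exact Nat.le_ceil _
  have hceil_lt : (k : ℝ) < β * ((n : ℝ) + 1) + 1 := by
    rw [hk]
    exact Nat.ceil_lt_add_one (by positivity)
  constructor
  · rw [le_div_iff₀ hpos, hmincast]
    refine le_min hceil_ge ?_
    nlinarith
  · rw [div_le_iff₀ hpos, hmincast]
    have : min (k : ℝ) ((n : ℝ) + 1) ≤ (k : ℝ) := min_le_left _ _
    have hexp : (β + 1 / ((n : ℝ) + 1)) * ((n : ℝ) + 1) = β * ((n : ℝ) + 1) + 1 := by
      field_simp
    rw [hexp]
    linarith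
end
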